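/- arXiv:1301.3264 — 2 statements merged into one kernel-verified Lean document; each statement's English description precedes it below -/
import Mathlib

section
/- Let f : I → (0,∞) be a differentiable positive function on an open interval I ⊆ (0,∞). Then f is geometrically convex on I if and only if the function x ↦ x·f'(x)/f(x) is monotone increasing on I. -/
/-!
Substituting `x = exp s` turns geometric means into arithmetic means, so `f` is geometrically
convex on `I` exactly when `g t = log (f (exp t))` is convex on `log '' I`. A differentiable
function on an open interval is convex iff its derivative is monotone, and
`g' t = x f'(x) / f(x)` at `x = exp t`; as `exp` is an increasing bijection onto `(0, ∞)`,
monotonicity of `g'` is monotonicity of `x ↦ x f'(x) / f(x)`.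
-/

open Real Set

def GeomConvexOn (S : Set ℝ) (f : ℝ → ℝ) : Prop :=
  ∀ x ∈ S, ∀ y ∈ S, ∀ l ∈ Icc (0:ℝ) 1, f (x ^ l * y ^ (1 - l)) ≤ f x ^ l * f y ^ (1 - l)

theorem convexOn_iff_forall_mem_Icc {𝕜 E β : Type*} [Ring 𝕜] [PartialOrder 𝕜]
    [IsOrderedRing 𝕜] [AddCommMonoid E] [SMul 𝕜 E] [AddCommMonoid β] [PartialOrder β]
    [SMul 𝕜 β] {s : Set E} {g : E → β} (hs : Convex 𝕜 s) :
    ConvexOn 𝕜 s g ↔ ∀ x ∈ s, ∀ y ∈ s, ∀ l ∈ Icc (0:𝕜) 1,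
      g (l • x + (1 - l) • y) ≤ l • g x + (1 - l) • g y := by
  refine ⟨fun hg x hx y hy l hl => hg.2 hx hy hl.1 (sub_nonneg.2 hl.2) (add_sub_cancel _ _),
    fun hg => ⟨hs, fun x hx y hy a b ha hb hab => ?_⟩⟩
  obtain rfl : b = 1 - a := eq_sub_of_add_eq' hab
  exact hg x hx y hy a ⟨ha, sub_nonneg.1 hb⟩

theorem le_rpow_mul_rpow_iff_log_le {p u v : ℝ} (l m : ℝ) (hp : 0 < p) (hu : 0 < u)
    (hv : 0 < v) : p ≤ u ^ l * v ^ m ↔ log p ≤ l * log u + m * log v := by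
  rw [← log_le_log_iff hp (by positivity), log_mul (by positivity) (by positivity),
    log_rpow hu, log_rpow hv]

theorem geomConvexOn_iff_convexOn_log_comp_exp {S : Set ℝ} {f : ℝ → ℝ} (hS : S ⊆ Ioi 0)
    (hSc : S.OrdConnected) (hf : ∀ x ∈ S, 0 < f x) :
    GeomConvexOn S f ↔ ConvexOn ℝ (exp ⁻¹' S) (fun t => log (f (exp t))) := by
  have hT : Convex ℝ (exp ⁻¹' S) := (hSc.preimage_mono exp_monotone).convex
  have hS_image : exp '' (exp ⁻¹' S) = S := image_preimage_eq_of_subset (range_exp ▸ hS)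
  rw [convexOn_iff_forall_mem_Icc hT, GeomConvexOn]
  conv_lhs => rw [← hS_image]
  simp only [forall_mem_image, smul_eq_mul]
  refine forall₂_congr fun s hs => forall₂_congr fun t ht => forall₂_congr fun l hl => ?_
  have hmean : l * s + (1 - l) * t ∈ exp ⁻¹' S :=
    hT hs ht hl.1 (sub_nonneg.2 hl.2) (add_sub_cancel _ _)
  rw [← exp_mul, ← exp_mul, ← exp_add, mul_comm s, mul_comm t]
  exact le_rpow_mul_rpow_iff_log_le l (1 - l) (hf _ hmean) (hf _ hs) (hf _ ht)

theorem convexOn_iff_monotoneOn_deriv {D : Set ℝ} {g : ℝ → ℝ} (hD : Convex ℝ D)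
    (hDo : IsOpen D) (hg : ∀ x ∈ D, DifferentiableAt ℝ g x) :
    ConvexOn ℝ D g ↔ MonotoneOn (deriv g) D := by
  refine ⟨fun hc => hc.monotoneOn_deriv hg, fun hm => ?_⟩
  rw [← hDo.interior_eq] at hm
  refine hm.convexOn_of_deriv hD (fun x hx => (hg x hx).continuousAt.continuousWithinAt) ?_
  rw [hDo.interior_eq]
  exact fun x hx => (hg x hx).differentiableWithinAt

theorem StrictMono.monotoneOn_comp_preimage_iff {α β γ : Type*} [LinearOrder α]
    [Preorder β] [Preorder γ] {e : α → β} (he : StrictMono e) {S : Set β} (hS : S ⊆ range e)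
    {h : β → γ} : MonotoneOn (h ∘ e) (e ⁻¹' S) ↔ MonotoneOn h S := by
  conv_rhs => rw [← image_preimage_eq_of_subset hS]
  simp only [MonotoneOn, forall_mem_image, he.le_iff_le, Function.comp_apply]

theorem hasDerivAt_log_comp_exp {f : ℝ → ℝ} {t : ℝ} (hf : DifferentiableAt ℝ f (exp t))
    (hft : f (exp t) ≠ 0) :
    HasDerivAt (fun t => log (f (exp t))) (exp t * deriv f (exp t) / f (exp t)) t := by
  rw [mul_comm]
  exact (hf.hasDerivAt.comp t (hasDerivAt_exp t)).log hft

theorem geom_convex_iff_mono (a b : ℝ) (ha : 0 ≤ a) (f : ℝ → ℝ)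
    (hpos : ∀ x ∈ Set.Ioo a b, 0 < f x)
    (hdiff : ∀ x ∈ Set.Ioo a b, DifferentiableAt ℝ f x) :
    (∀ x ∈ Set.Ioo a b, ∀ y ∈ Set.Ioo a b, ∀ l ∈ Set.Icc (0:ℝ) 1,
        f (x ^ l * y ^ (1 - l)) ≤ f x ^ l * f y ^ (1 - l))
      ↔ MonotoneOn (fun x => x * deriv f x / f x) (Set.Ioo a b) := by
  have hI : Ioo a b ⊆ Ioi 0 := fun x hx => ha.trans_lt hx.1
  have hderiv : ∀ t ∈ exp ⁻¹' Ioo a b,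
      HasDerivAt (fun t => log (f (exp t))) (exp t * deriv f (exp t) / f (exp t)) t :=
    fun t ht => hasDerivAt_log_comp_exp (hdiff _ ht) (hpos _ ht).ne'
  change GeomConvexOn (Ioo a b) f ↔ _
  rw [geomConvexOn_iff_convexOn_log_comp_exp hI ordConnected_Ioo hpos,
    convexOn_iff_monotoneOn_deriv (ordConnected_Ioo.preimage_mono exp_monotone).convex
      (isOpen_Ioo.preimage continuous_exp) fun t ht => (hderiv t ht).differentiableAt,
    ← exp_strictMono.monotoneOn_comp_preimage_iff (h := fun x => x * deriv f x / f x)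
      (range_exp ▸ hI)]
  have hEq : EqOn (deriv fun t => log (f (exp t))) ((fun x => x * deriv f x / f x) ∘ exp)
      (exp ⁻¹' Ioo a b) := fun t ht => (hderiv t ht).deriv
  exact ⟨fun h => h.congr hEq, fun h => h.congr hEq.symm⟩
end

section
/- For p, q > 1, the generalized hyperbolic sine sinh_{p,q}, defined as the inverse of arcsinh_{p,q}(x) = ∫_0^x (1+t^q)^(-1/p) dt on [0,∞), is geometrically convex on its domain (0, m*_{p,q}): for all r, s in the domain and λ ∈ [0,1], sinh_{p,q}(r^λ s^(1-λ)) ≤ sinh_{p,q}(r)^λ · sinh_{p,q}(s)^(1-λ), where m*_{p,q} = ∫_0^∞ (1+t^q)^(-1/p) dt (possibly +∞). -/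
/-!
With `F = arcsinh_{p,q}`, geometric convexity of the inverse `S` follows from geometric concavity
of `F`, i.e. concavity of `u ↦ log F(e^u)`, by the intermediate value theorem and monotonicity of
`F`. The derivative of `u ↦ log F(e^u)` is `x F'(x) / F(x)` at `x = e^u`, and
`x F'(x) = ∫₀ˣ F'(t) w(t) dt` with `w(t) = 1 - (q/p) t^q / (1 + t^q)`. So this derivative is an
average of the decreasing function `w` against the positive weight `F'` over `[0, x]`, hence it
decreases in `x`.
-/

open Real Set intervalIntegral MeasureTheory

theorem integral_mul_antitoneOn_mul_le {g w : ℝ → ℝ} {a x y : ℝ} (hax : a ≤ x) (hxy : x ≤ y)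
    (hg : ∀ t ∈ Icc a y, 0 ≤ g t) (hw : AntitoneOn w (Icc a y))
    (hgi : IntervalIntegrable g volume a y)
    (hgwi : IntervalIntegrable (fun t => g t * w t) volume a y) :
    (∫ t in a..y, g t * w t) * ∫ t in a..x, g t ≤ (∫ t in a..x, g t * w t) * ∫ t in a..y, g t := by
  have hay := hax.trans hxy
  have sub_ax : uIcc a x ⊆ uIcc a y := uIcc_subset_uIcc_left (by simp [uIcc_of_le hay, hax, hxy])
  have sub_xy : uIcc x y ⊆ uIcc a y := uIcc_subset_uIcc_right (by simp [uIcc_of_le hay, hax, hxy])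
  rw [← integral_add_adjacent_intervals (hgi.mono_set sub_ax) (hgi.mono_set sub_xy),
    ← integral_add_adjacent_intervals (hgwi.mono_set sub_ax) (hgwi.mono_set sub_xy)]
  set A := ∫ t in a..x, g t
  set B := ∫ t in x..y, g t
  have hA : 0 ≤ A := integral_nonneg hax fun t ht => hg t ⟨ht.1, ht.2.trans hxy⟩
  have hB : 0 ≤ B := integral_nonneg hxy fun t ht => hg t ⟨hax.trans ht.1, ht.2⟩
  -- on `[a, x]` the weight `w` is at least `w x`, on `[x, y]` at most `w x`
  have hleft : w x * A ≤ ∫ t in a..x, g t * w t := by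
    rw [← intervalIntegral.integral_const_mul]
    refine integral_mono_on hax ((hgi.mono_set sub_ax).const_mul _) (hgwi.mono_set sub_ax)
      fun t ht => ?_
    rw [mul_comm]
    exact mul_le_mul_of_nonneg_left (hw ⟨ht.1, ht.2.trans hxy⟩ ⟨hax, hxy⟩ ht.2)
      (hg t ⟨ht.1, ht.2.trans hxy⟩)
  have hright : ∫ t in x..y, g t * w t ≤ w x * B := by
    rw [← intervalIntegral.integral_const_mul]
    refine integral_mono_on hxy (hgwi.mono_set sub_xy) ((hgi.mono_set sub_xy).const_mul _)
      fun t ht => ?_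
    rw [mul_comm (w x)]
    exact mul_le_mul_of_nonneg_left (hw ⟨hax, hxy⟩ ⟨hax.trans ht.1, ht.2⟩ ht.1)
      (hg t ⟨hax.trans ht.1, ht.2⟩)
  nlinarith [mul_le_mul_of_nonneg_right hleft hB, mul_le_mul_of_nonneg_right hright hA]

theorem rpow_mul_rpow_mem_uIcc {x y l : ℝ} (hx : 0 ≤ x) (hy : 0 ≤ y) (hl : l ∈ Icc (0 : ℝ) 1) :
    x ^ l * y ^ (1 - l) ∈ uIcc x y := by
  obtain ⟨hl0, hl1⟩ := hl
  have h1l : 0 ≤ 1 - l := sub_nonneg.2 hl1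
  have hself : ∀ z : ℝ, 0 ≤ z → z ^ l * z ^ (1 - l) = z := fun z hz => by
    rw [← rpow_add' hz (by simp), add_sub_cancel, rpow_one]
  rcases le_total x y with hxy | hyx
  · rw [uIcc_of_le hxy]
    constructor
    · calc x = x ^ l * x ^ (1 - l) := (hself x hx).symm
        _ ≤ x ^ l * y ^ (1 - l) := by gcongr
    · calc x ^ l * y ^ (1 - l) ≤ y ^ l * y ^ (1 - l) := by gcongr
        _ = y := hself y hy
  · rw [uIcc_of_ge hyx]
    constructor
    · calc y = y ^ l * y ^ (1 - l) := (hself y hy).symm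
        _ ≤ x ^ l * y ^ (1 - l) := by gcongr
    · calc x ^ l * y ^ (1 - l) ≤ x ^ l * x ^ (1 - l) := by gcongr
        _ = x := hself x hx

theorem rpow_mul_rpow_le_of_concaveOn_log_comp_exp {f : ℝ → ℝ}
    (hf : ConcaveOn ℝ univ fun u => log (f (exp u))) (hpos : ∀ x, 0 < x → 0 < f x)
    {a b l : ℝ} (ha : 0 < a) (hb : 0 < b) (hl : l ∈ Icc (0 : ℝ) 1) :
    f a ^ l * f b ^ (1 - l) ≤ f (a ^ l * b ^ (1 - l)) := by
  have hmean : a ^ l * b ^ (1 - l) = exp (l * log a + (1 - l) * log b) := by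
    rw [exp_add, rpow_def_of_pos ha, rpow_def_of_pos hb, mul_comm l, mul_comm (1 - l)]
  have key := hf.2 (mem_univ (log a)) (mem_univ (log b)) hl.1 (sub_nonneg.2 hl.2)
    (add_sub_cancel l 1)
  simp only [smul_eq_mul, exp_log ha, exp_log hb] at key
  rw [rpow_def_of_pos (hpos a ha), rpow_def_of_pos (hpos b hb), ← exp_add, hmean,
    ← exp_log (hpos _ (exp_pos _))]
  gcongr
  linarith

theorem Set.LeftInvOn.apply_le_of_le_apply {α β : Type*} [ConditionallyCompleteLinearOrder α]
    [TopologicalSpace α] [OrderTopology α] [DenselyOrdered α] [LinearOrder β] [TopologicalSpace β]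
    [OrderClosedTopology β] {F : α → β} {S : β → α} {s : Set α} (hS : LeftInvOn S F s)
    (hs : s.OrdConnected) (hFc : ContinuousOn F s) (hFm : StrictMonoOn F s) {a b z : α} {y : β}
    (ha : a ∈ s) (hb : b ∈ s) (hz : z ∈ s) (hy : y ∈ uIcc (F a) (F b)) (hyz : y ≤ F z) :
    S y ≤ z := by
  obtain ⟨c, hc, rfl⟩ := intermediate_value_uIcc (hFc.mono (hs.uIcc_subset ha hb)) hy
  have hcs : c ∈ s := hs.uIcc_subset ha hb hc
  rw [hS hcs]
  exact (hFm.le_iff_le hcs hz).1 hyz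

theorem one_add_rpow_pos {t : ℝ} (ht : 0 ≤ t) (q : ℝ) : 0 < 1 + t ^ q :=
  add_pos_of_pos_of_nonneg one_pos (rpow_nonneg ht q)

noncomputable def arcsinhPQDeriv (p q t : ℝ) : ℝ := (1 + t ^ q) ^ (-1/p)

noncomputable def arcsinhPQ (p q x : ℝ) : ℝ := ∫ t in (0:ℝ)..x, arcsinhPQDeriv p q t

section arcsinhPQ

variable {p q : ℝ}

theorem arcsinhPQDeriv_pos {t : ℝ} (ht : 0 ≤ t) : 0 < arcsinhPQDeriv p q t :=
  rpow_pos_of_pos (one_add_rpow_pos ht q) _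

theorem continuousOn_arcsinhPQDeriv (hq : 0 ≤ q) : ContinuousOn (arcsinhPQDeriv p q) (Ici 0) :=
  (continuous_const.add (continuous_rpow_const hq)).continuousOn.rpow_const fun _ ht =>
    Or.inl (one_add_rpow_pos ht q).ne'

theorem intervalIntegrable_arcsinhPQDeriv (hq : 0 ≤ q) {x y : ℝ} (hx : 0 ≤ x) (hy : 0 ≤ y) :
    IntervalIntegrable (arcsinhPQDeriv p q) volume x y :=
  ((continuousOn_arcsinhPQDeriv hq).mono fun _ ht =>
    le_trans (le_min hx hy) ht.1).intervalIntegrable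

theorem arcsinhPQ_pos (hq : 0 ≤ q) {x : ℝ} (hx : 0 < x) : 0 < arcsinhPQ p q x :=
  intervalIntegral_pos_of_pos_on (intervalIntegrable_arcsinhPQDeriv hq le_rfl hx.le)
    (fun _ ht => arcsinhPQDeriv_pos ht.1.le) hx

theorem hasDerivAt_arcsinhPQ (hq : 0 ≤ q) {x : ℝ} (hx : 0 < x) :
    HasDerivAt (arcsinhPQ p q) (arcsinhPQDeriv p q x) x :=
  integral_hasDerivAt_right (intervalIntegrable_arcsinhPQDeriv hq le_rfl hx.le)
    (((continuousOn_arcsinhPQDeriv hq).mono Ioi_subset_Ici_self).stronglyMeasurableAtFilter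
      isOpen_Ioi x hx)
    ((continuousOn_arcsinhPQDeriv hq).continuousAt (Ici_mem_nhds hx))

theorem continuousOn_arcsinhPQ (hq : 0 ≤ q) : ContinuousOn (arcsinhPQ p q) (Ioi 0) :=
  fun _ hx => (hasDerivAt_arcsinhPQ hq hx).continuousAt.continuousWithinAt

theorem strictMonoOn_arcsinhPQ (hq : 0 ≤ q) : StrictMonoOn (arcsinhPQ p q) (Ioi 0) :=
  strictMonoOn_of_deriv_pos (convex_Ioi 0) (continuousOn_arcsinhPQ hq) fun x hx => by
    rw [interior_Ioi] at hx
    rw [(hasDerivAt_arcsinhPQ hq hx).deriv]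
    exact arcsinhPQDeriv_pos hx.le

theorem hasDerivAt_mul_arcsinhPQDeriv (hq : 1 ≤ q) {t : ℝ} (ht : 0 ≤ t) :
    HasDerivAt (fun s => s * arcsinhPQDeriv p q s)
      (arcsinhPQDeriv p q t * (1 - q / p * (t ^ q / (1 + t ^ q)))) t := by
  have hbase : 0 < 1 + t ^ q := one_add_rpow_pos ht q
  have hderiv : HasDerivAt (arcsinhPQDeriv p q)
      (q * t ^ (q - 1) * (-1/p) * (1 + t ^ q) ^ (-1/p - 1)) t :=
    ((hasDerivAt_rpow_const (Or.inr hq)).const_add 1).rpow_const (Or.inl hbase.ne')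
  refine ((hasDerivAt_id t).mul hderiv).congr_deriv ?_
  have htq : t * t ^ (q - 1) = t ^ q := by
    rcases ht.eq_or_lt with rfl | -
    · rw [zero_mul, zero_rpow (by linarith)]
    · rw [← rpow_one_add' ht (by linarith), add_sub_cancel]
  rw [rpow_sub_one hbase.ne', id, one_mul, arcsinhPQDeriv, ← htq]
  ring

theorem antitoneOn_one_sub_div_mul_rpow_div (hp : 0 < p) (hq : 0 ≤ q) :
    AntitoneOn (fun t => 1 - q / p * (t ^ q / (1 + t ^ q))) (Ici 0) := by
  intro s hs t ht hst
  have hs' : 0 < 1 + s ^ q := one_add_rpow_pos hs q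
  have ht' : 0 < 1 + t ^ q := one_add_rpow_pos ht q
  have hpow : s ^ q ≤ t ^ q := rpow_le_rpow hs hst hq
  have hfrac : s ^ q / (1 + s ^ q) ≤ t ^ q / (1 + t ^ q) := by
    rw [div_le_div_iff₀ hs' ht']
    linarith
  dsimp only
  gcongr

theorem intervalIntegrable_arcsinhPQDeriv_mul (hq : 0 ≤ q) {x : ℝ} (hx : 0 ≤ x) :
    IntervalIntegrable (fun t => arcsinhPQDeriv p q t * (1 - q / p * (t ^ q / (1 + t ^ q))))
      volume 0 x := by
  refine ContinuousOn.intervalIntegrable fun t htx => ?_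
  have ht : 0 ≤ t := le_trans (le_min le_rfl hx) htx.1
  have hbase : ContinuousWithinAt (fun t : ℝ => 1 + t ^ q) (uIcc 0 x) t :=
    (continuous_const.add (continuous_rpow_const hq)).continuousWithinAt
  exact (hbase.rpow_const (Or.inl (one_add_rpow_pos ht q).ne')).mul
    (continuousWithinAt_const.sub (continuousWithinAt_const.mul
      ((continuous_rpow_const hq).continuousWithinAt.div hbase
        (one_add_rpow_pos ht q).ne')))

theorem integral_arcsinhPQDeriv_mul (hq : 1 ≤ q) {x : ℝ} (hx : 0 ≤ x) :
    ∫ t in (0:ℝ)..x, arcsinhPQDeriv p q t * (1 - q / p * (t ^ q / (1 + t ^ q)))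
      = x * arcsinhPQDeriv p q x := by
  rw [integral_eq_sub_of_hasDerivAt
    (fun t ht => hasDerivAt_mul_arcsinhPQDeriv hq (le_trans (le_min le_rfl hx) ht.1))
    (intervalIntegrable_arcsinhPQDeriv_mul (zero_le_one.trans hq) hx), zero_mul, sub_zero]

theorem mul_arcsinhPQDeriv_mul_arcsinhPQ_le (hp : 0 < p) (hq : 1 ≤ q) {x y : ℝ} (hx : 0 ≤ x)
    (hxy : x ≤ y) :
    y * arcsinhPQDeriv p q y * arcsinhPQ p q x ≤ x * arcsinhPQDeriv p q x * arcsinhPQ p q y := by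
  have hq0 : 0 ≤ q := zero_le_one.trans hq
  have hy := hx.trans hxy
  rw [← integral_arcsinhPQDeriv_mul hq hx, ← integral_arcsinhPQDeriv_mul hq hy]
  exact integral_mul_antitoneOn_mul_le hx hxy (fun t ht => (arcsinhPQDeriv_pos ht.1).le)
    ((antitoneOn_one_sub_div_mul_rpow_div hp hq0).mono Icc_subset_Ici_self)
    (intervalIntegrable_arcsinhPQDeriv hq0 le_rfl hy) (intervalIntegrable_arcsinhPQDeriv_mul hq0 hy)

theorem concaveOn_log_arcsinhPQ_exp (hp : 0 < p) (hq : 1 ≤ q) :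
    ConcaveOn ℝ univ fun u => log (arcsinhPQ p q (exp u)) := by
  have hq0 : 0 ≤ q := zero_le_one.trans hq
  have hderiv : ∀ u, HasDerivAt (fun u => log (arcsinhPQ p q (exp u)))
      (exp u * arcsinhPQDeriv p q (exp u) / arcsinhPQ p q (exp u)) u := fun u => by
    have h := ((hasDerivAt_arcsinhPQ (p := p) hq0 (exp_pos u)).comp u (hasDerivAt_exp u)).log
      (arcsinhPQ_pos hq0 (exp_pos u)).ne'
    rwa [mul_comm (arcsinhPQDeriv p q (exp u))] at h
  refine AntitoneOn.concaveOn_of_deriv convex_univ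
    (fun u _ => (hderiv u).continuousAt.continuousWithinAt)
    (fun u _ => (hderiv u).differentiableAt.differentiableWithinAt) fun u _ v _ huv => ?_
  rw [(hderiv u).deriv, (hderiv v).deriv,
    div_le_div_iff₀ (arcsinhPQ_pos hq0 (exp_pos v)) (arcsinhPQ_pos hq0 (exp_pos u))]
  exact mul_arcsinhPQDeriv_mul_arcsinhPQ_le hp hq (exp_pos u).le (exp_le_exp.2 huv)

theorem arcsinhPQ_rpow_mul_rpow_le (hp : 0 < p) (hq : 1 ≤ q) {a b l : ℝ} (ha : 0 < a)
    (hb : 0 < b) (hl : l ∈ Icc (0 : ℝ) 1) :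
    arcsinhPQ p q a ^ l * arcsinhPQ p q b ^ (1 - l) ≤ arcsinhPQ p q (a ^ l * b ^ (1 - l)) :=
  rpow_mul_rpow_le_of_concaveOn_log_comp_exp (concaveOn_log_arcsinhPQ_exp hp hq)
    (fun _ => arcsinhPQ_pos (zero_le_one.trans hq)) ha hb hl

end arcsinhPQ

theorem sinh_pq_geom_convex (p q : ℝ) (hp : 1 < p) (hq : 1 < q) (S : ℝ → ℝ)
    (hS : ∀ x ∈ Set.Ici (0:ℝ),
      S (∫ t in (0:ℝ)..x, (1 + t ^ q) ^ (-1/p)) = x) :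
    ∀ r ∈ (fun x => ∫ t in (0:ℝ)..x, (1 + t ^ q) ^ (-1/p)) '' Set.Ioi (0:ℝ),
      ∀ s ∈ (fun x => ∫ t in (0:ℝ)..x, (1 + t ^ q) ^ (-1/p)) '' Set.Ioi (0:ℝ),
        ∀ l ∈ Set.Icc (0:ℝ) 1,
          S (r ^ l * s ^ (1 - l)) ≤ S r ^ l * S s ^ (1 - l) := by
  rintro r ⟨a, ha, rfl⟩ s ⟨b, hb, rfl⟩ l hl
  have hq0 : 0 ≤ q := by linarith
  have hinv : LeftInvOn S (arcsinhPQ p q) (Ioi 0) := fun x hx => hS x (mem_Ici.2 (le_of_lt hx))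
  change S (arcsinhPQ p q a ^ l * arcsinhPQ p q b ^ (1 - l))
      ≤ S (arcsinhPQ p q a) ^ l * S (arcsinhPQ p q b) ^ (1 - l)
  rw [hinv ha, hinv hb]
  exact hinv.apply_le_of_le_apply ordConnected_Ioi (continuousOn_arcsinhPQ hq0)
    (strictMonoOn_arcsinhPQ hq0) ha hb (mul_pos (rpow_pos_of_pos ha l) (rpow_pos_of_pos hb _))
    (rpow_mul_rpow_mem_uIcc (arcsinhPQ_pos hq0 ha).le (arcsinhPQ_pos hq0 hb).le hl)
    (arcsinhPQ_rpow_mul_rpow_le (by linarith) hq.le ha hb hl)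
end
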